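/- For every integer m ≥ 0, Σ_{k=0}^{m} C(2m+1, 2k) (-1)^k E_{2m-2k+1} = (-1)^m, where C(m,j) denotes the binomial coefficient. -/

import Mathlib

open Polynomial Finset

/-- The derivative polynomials for tangent: `P 0 = X`,
`P (n+1) = (1 + X^2) * (P n)'`. -/
noncomputable def P : ℕ → Polynomial ℚ
  | 0 => X
  | n + 1 => (1 + X ^ 2) * derivative (P n)

/-- The derivative polynomials for secant: `Q 0 = 1`,
`Q (n+1) = (1 + X^2) * (Q n)' + X * Q n`. -/
noncomputable def Q : ℕ → Polynomial ℚ
  | 0 => 1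
  | n + 1 => (1 + X ^ 2) * derivative (Q n) + X * Q n

/-- The Euler numbers: `E (2j) = Q (2j) (0)` (secant numbers) and
`E (2j+1) = P (2j+1) (0)` (tangent numbers). -/
noncomputable def E (n : ℕ) : ℚ := if Even n then (Q n).eval 0 else (P n).eval 0

/-!
Substituting `x = tan θ` turns `(1 + x²) d/dx` into `d/dθ`, so `P n (tan θ)` is the `n`-th
derivative of `tan`, and `D f = (1 + x²) f' - x f` becomes `f ↦ sec θ · (cos θ · f)'`.
Hence `D` satisfies the twisted Leibniz rule `D (p q) = (1 + x²) p' q + p D q`, and expanding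
`Dⁿ x = Dⁿ (x · 1)`, i.e. `sin⁽ⁿ⁾ = (tan · cos)⁽ⁿ⁾`, gives
`Dⁿ x = ∑ C(n, j) P (n - j) Dʲ 1`. Since `D² c = -c` for constants `c`, at `x = 0` and
`n = 2m + 1` the left side is `D^(2m) 1 = (-1)^m`, the terms with odd `j` vanish, and
`D^(2k) 1 = (-1)^k`.
-/

theorem iterate_apply_mul_of_leibniz {A : Type*} [NonUnitalNonAssocSemiring A] (δ L : A →+ A)
    (hL : ∀ a b, L (a * b) = δ a * b + a * L b) (n : ℕ) (a b : A) :
    L^[n] (a * b) = ∑ ij ∈ antidiagonal n, n.choose ij.1 • (δ^[ij.1] a * L^[ij.2] b) := by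
  induction n with
  | zero => simp
  | succ n ih =>
    rw [sum_antidiagonal_choose_succ_nsmul (fun i j => δ^[i] a * L^[j] b) n]
    simp only [Function.iterate_succ_apply', ih, map_sum, map_nsmul, hL, smul_add,
      sum_add_distrib, add_comm]
    congr 1
    refine sum_congr rfl fun ⟨i, j⟩ hij => ?_
    rw [n.choose_symm_of_eq_add (mem_antidiagonal.1 hij).symm]

theorem Finset.sum_range_two_mul {M : Type*} [AddCommMonoid M] (f : ℕ → M) (n : ℕ) :
    ∑ i ∈ range (2 * n), f i = ∑ i ∈ range n, (f (2 * i) + f (2 * i + 1)) := by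
  induction n with
  | zero => simp
  | succ n ih =>
    rw [mul_add, mul_one, sum_range_succ, sum_range_succ, sum_range_succ, ih, add_assoc]

section Operators

variable {R : Type*} [CommRing R]

noncomputable def tanDeriv : R[X] →ₗ[R] R[X] :=
  LinearMap.mulLeft R (1 + X ^ 2) ∘ₗ derivative

noncomputable def secConjDeriv : R[X] →ₗ[R] R[X] := tanDeriv - LinearMap.mulLeft R X

@[simp]
theorem tanDeriv_apply (p : R[X]) : tanDeriv p = (1 + X ^ 2) * derivative p := rfl

@[simp]
theorem secConjDeriv_apply (p : R[X]) :
    secConjDeriv p = (1 + X ^ 2) * derivative p - X * p := rfl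

theorem secConjDeriv_mul (p q : R[X]) :
    secConjDeriv (p * q) = tanDeriv p * q + p * secConjDeriv q := by
  simp only [secConjDeriv_apply, tanDeriv_apply, derivative_mul]
  ring

theorem secConjDeriv_X : secConjDeriv (X : R[X]) = 1 := by
  simp only [secConjDeriv_apply, derivative_X]
  ring

theorem secConjDeriv_C (a : R) : secConjDeriv (C a) = -(C a * X) := by
  simp only [secConjDeriv_apply, derivative_C]
  ring

theorem secConjDeriv_secConjDeriv_C (a : R) : secConjDeriv (secConjDeriv (C a)) = -C a := by
  rw [secConjDeriv_C, secConjDeriv_apply]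
  simp only [derivative_neg, derivative_mul, derivative_C, derivative_X]
  ring

theorem iterate_secConjDeriv_two_mul_one (k : ℕ) :
    secConjDeriv^[2 * k] (1 : R[X]) = C ((-1) ^ k) := by
  induction k with
  | zero => simp
  | succ k ih =>
    rw [Nat.mul_succ, Function.iterate_succ_apply', Function.iterate_succ_apply', ih,
      secConjDeriv_secConjDeriv_C, pow_succ, mul_neg_one, C_neg]

theorem eval_zero_iterate_secConjDeriv_two_mul_add_one_one (k : ℕ) :
    (secConjDeriv^[2 * k + 1] (1 : R[X])).eval 0 = 0 := by
  rw [Function.iterate_succ_apply', iterate_secConjDeriv_two_mul_one, secConjDeriv_C]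
  simp

theorem iterate_secConjDeriv_X_eq_sum (n : ℕ) :
    secConjDeriv^[n] (X : R[X]) =
      ∑ j ∈ range (n + 1), n.choose j • (tanDeriv^[n - j] X * secConjDeriv^[j] 1) := by
  have h := iterate_apply_mul_of_leibniz (tanDeriv (R := R)).toAddMonoidHom
    secConjDeriv.toAddMonoidHom
    secConjDeriv_mul n (X : R[X]) 1
  simp only [mul_one, LinearMap.toAddMonoidHom_coe] at h
  rw [h, ← Nat.sum_antidiagonal_swap]
  simp only [Prod.fst_swap, Prod.snd_swap]
  rw [Nat.sum_antidiagonal_eq_sum_range_succ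
    (fun j i => n.choose i • (tanDeriv^[i] X * secConjDeriv^[j] 1))]
  refine sum_congr rfl fun j hj => ?_
  rw [Nat.choose_symm (Nat.lt_succ_iff.mp (mem_range.mp hj))]

end Operators

theorem P_eq_iterate_tanDeriv (n : ℕ) : P n = tanDeriv^[n] X := by
  induction n with
  | zero => rfl
  | succ n ih => rw [Function.iterate_succ_apply', ← ih]; rfl

theorem E_two_mul_add_one (n : ℕ) : E (2 * n + 1) = (P (2 * n + 1)).eval 0 :=
  if_neg (Nat.not_even_two_mul_add_one n)

theorem euler_odd_alternating_sum (m : ℕ) :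
    ∑ k ∈ Finset.range (m + 1),
        ((2 * m + 1).choose (2 * k) : ℚ) * (-1) ^ k * E (2 * m - 2 * k + 1) =
    (-1) ^ m := by
  have h := congrArg (eval 0) (iterate_secConjDeriv_X_eq_sum (R := ℚ) (2 * m + 1))
  rw [Function.iterate_succ_apply, secConjDeriv_X, iterate_secConjDeriv_two_mul_one, eval_C,
    eval_finsetSum, show 2 * m + 1 + 1 = 2 * (m + 1) by ring, sum_range_two_mul] at h
  rw [h]
  refine sum_congr rfl fun k hk => ?_
  have hkm : 2 * m + 1 - 2 * k = 2 * (m - k) + 1 := by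
    have := mem_range.mp hk
    omega
  rw [show 2 * m - 2 * k + 1 = 2 * (m - k) + 1 by omega, E_two_mul_add_one, ← hkm]
  simp only [nsmul_eq_mul, eval_mul, eval_natCast, iterate_secConjDeriv_two_mul_one,
    eval_zero_iterate_secConjDeriv_two_mul_add_one_one, ← P_eq_iterate_tanDeriv, eval_C]
  ring
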